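/- arXiv:2312.08297 — 2 statements merged into one kernel-verified Lean document; each statement's English description precedes it below -/
import Mathlib

section
/- Let (X,d,m) be a compact Ahlfors Q-regular space, let 1 < p < ∞ with 1/p + 1/p' = 1, and let 1/p' ≤ s < 1. There exists a constant Ψ = Ψ(X,p,s) ≥ 1 such that for all M ≥ 1 there exists a constant 1 < Ã < ∞, depending only on X, p, s and M, such that: for any countable family {B_d(x_k,r_k)}_{k∈F} of balls in X for which η*_{X,p}(x_k, M·r_k) is defined for every k and the family {B_d(x_k, Ψ·η*_{X,p}(x_k, M·r_k))}_{k∈F} is pairwise disjoint, and for any compact set E ⊆ X with E = ∪_k E_k and E_k ⊆ B_d(x_k,r_k) for all k, one has Σ_{k∈F} C_{K_{X,s},p}(E_k) ≤ Ã · C_{K_{X,s},p}(E). -/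
noncomputable section

open MeasureTheory ENNReal NNReal

/-- The potential `K*f(x) = ∫ K(x,y) f(y) dm(y)` of a function `f` w.r.t. a kernel `K`. -/
def potential {X : Type*} [MeasurableSpace X] (m : Measure X)
    (K : X → X → ℝ) (f : X → ℝ) (x : X) : ℝ :=
  ∫ y, K x y * f y ∂m

/-- The `L^p` capacity of a set `E` associated to a kernel `K`:
`C_{K,p}(E) = inf { ‖f‖_p^p : f ∈ L^p, K*f ≥ 1 on E }`. -/
def capacity {X : Type*} [MeasurableSpace X] (m : Measure X)
    (K : X → X → ℝ) (p : ℝ) (E : Set X) : ℝ≥0∞ :=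
  ⨅ (f : X → ℝ) (_ : MemLp f (ENNReal.ofReal p) m ∧ ∀ x ∈ E, 1 ≤ potential m K f x),
    eLpNorm f (ENNReal.ofReal p) m ^ p

/-- The Riesz kernel `K_{X,s}(x,y) = d(x,y)^{-Qs}`. -/
def rieszKernel {X : Type*} [MetricSpace X] (Q s : ℝ) (x y : X) : ℝ :=
  dist x y ^ (-(Q * s))

/-- `(X,d,m)` is Ahlfors `Q`-regular: `c₁ r^Q ≤ m(B(x,r)) ≤ c₂ r^Q` for `0 < r < diam X`. -/
def IsAhlfors {X : Type*} [MetricSpace X] [MeasurableSpace X] (m : Measure X) (Q : ℝ) : Prop :=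
  ∃ c₁ c₂ : ℝ, 0 < c₁ ∧ c₁ ≤ c₂ ∧ ∀ (x : X) (r : ℝ), 0 < r →
    r < Metric.diam (Set.univ : Set X) →
    ENNReal.ofReal (c₁ * r ^ Q) ≤ m (Metric.ball x r) ∧
      m (Metric.ball x r) ≤ ENNReal.ofReal (c₂ * r ^ Q)

/-- The set appearing in the definition of the Aikawa–Borichev radius
`η_{X,p}(x,r)`: radii `R > 0` with `m(B(x,R)) ≥ C_{K_{X,s},p}(B(x,r))`. -/
def etaSet {X : Type*} [MetricSpace X] [MeasurableSpace X] (m : Measure X)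
    (Q s p : ℝ) (x : X) (r : ℝ) : Set ℝ :=
  {R : ℝ | 0 < R ∧ capacity m (rieszKernel Q s) p (Metric.ball x r) ≤ m (Metric.ball x R)}

/-- The Aikawa–Borichev radius `η*_{X,p}(x,r) = max (r, η_{X,p}(x,r))`. -/
def etaStar {X : Type*} [MetricSpace X] [MeasurableSpace X] (m : Measure X)
    (Q s p : ℝ) (x : X) (r : ℝ) : ℝ :=
  max r (sInf (etaSet m Q s p x r))

/-- The (unnormalized) dyadic Poisson kernel
`y^{-Q} Σ_k 2^{-(Q+1)k} χ_{B(x,2^k y)}(z)`. -/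
def poissonKernelX {X : Type*} [MetricSpace X] (Q : ℝ) (x : X) (y : ℝ) (z : X) : ℝ :=
  y ^ (-Q) * ∑' k : ℕ, (2 : ℝ) ^ (-((Q + 1) * (k : ℝ))) *
    (Metric.ball x (2 ^ k * y)).indicator (fun _ => (1 : ℝ)) z

/-- The dyadic Poisson integral `PI(g)(x,y)` on `X × (0,∞)`. -/
def PI {X : Type*} [MetricSpace X] [MeasurableSpace X] (m : Measure X) (Q : ℝ)
    (g : X → ℝ) (x : X) (y : ℝ) : ℝ :=
  (∫ z, poissonKernelX Q x y z ∂m)⁻¹ * ∫ z, poissonKernelX Q x y z * g z ∂m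

/-!
Take `Ψ = 2` and `ηₖ = η*(xₖ, M rₖ)`, so that `Eₖ ⊆ B(xₖ, ηₖ)` and, by the choice of `η`,
`C(Eₖ) ≤ m(Bₖ)` with `Bₖ = B(xₖ, 2ηₖ)`. Let `f ≥ 0` be admissible for `E`.

If for every `x ∈ Eₖ` the part of `K * f (x)` coming from outside `Bₖ` is at most `1/2`, then
`2 f 1_{Bₖ}` is admissible for `Eₖ`; by disjointness these pieces contribute at most
`2^p ‖f‖_p^p`. For each remaining index the far part of the potential is comparable to
`∫ Tₖ f`, where `Tₖ` is the Riesz kernel with pole `xₖ` truncated outside `Bₖ`; hence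
`S = ∑ m(Bₖ) ≤ ∫ G f` with `G = ∑ m(Bₖ) Tₖ`. Doubling and the uniform bound on
`∫ K(x, ·) dm` give `G ≲ 1` (pack the disjoint balls `B(xₖ, ηₖ)`) and `∫ G ≲ S`, so Hölder yields
`S ≲ S^{1/p'} ‖f‖_p`, that is `S ≲ ‖f‖_p^p`.
-/

open Metric Function

lemma Real.rpow_neg_le_mul_rpow_neg {a b l κ : ℝ} (hκ : 0 ≤ κ) (ha : 0 < a) (hl : 0 < l)
    (h : a ≤ l * b) : b ^ (-κ) ≤ l ^ κ * a ^ (-κ) := by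
  calc b ^ (-κ) ≤ (a / l) ^ (-κ) :=
        Real.rpow_le_rpow_of_nonpos (div_pos ha hl) ((div_le_iff₀' hl).2 h) (neg_nonpos.2 hκ)
    _ = l ^ κ * a ^ (-κ) := by
        rw [Real.div_rpow ha.le hl.le, Real.rpow_neg hl.le, div_inv_eq_mul, mul_comm]

section Metric

variable {X : Type*} [MetricSpace X] {c x y : X} {η : ℝ}

lemma Metric.ball_subset_ball_two_mul : ball c η ⊆ ball c (2 * η) := by
  intro z hz
  rw [mem_ball] at *
  linarith [dist_nonneg (x := z) (y := c)]

lemma dist_center_le_two_mul_dist_of_mem_ball (hx : x ∈ ball c η) (hy : y ∉ ball c (2 * η)) :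
    dist c y ≤ 2 * dist x y := by
  rw [mem_ball, not_lt, dist_comm] at hy
  rw [mem_ball, dist_comm] at hx
  linarith [dist_triangle c x y]

lemma dist_le_two_mul_dist_center_of_mem_ball (hx : x ∈ ball c η) (hy : y ∉ ball c (2 * η)) :
    dist x y ≤ 2 * dist c y := by
  rw [mem_ball, not_lt, dist_comm] at hy
  rw [mem_ball] at hx
  linarith [dist_triangle x c y, dist_nonneg (x := x) (y := c)]

lemma dist_center_pos_of_mem_ball (hx : x ∈ ball c η) (hy : y ∉ ball c (2 * η)) : 0 < dist c y := by
  rw [mem_ball, not_lt, dist_comm] at hy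
  rw [mem_ball] at hx
  linarith [dist_nonneg (x := x) (y := c)]

end Metric

section RieszKernel

variable {X : Type*} [MetricSpace X] {Q s : ℝ}

lemma rieszKernel_nonneg (x y : X) : 0 ≤ rieszKernel Q s x y := Real.rpow_nonneg dist_nonneg _

lemma rieszKernel_comm (x y : X) : rieszKernel Q s x y = rieszKernel Q s y x := by
  rw [rieszKernel, rieszKernel, dist_comm]

lemma measurable_rieszKernel [MeasurableSpace X] [OpensMeasurableSpace X] (x : X) :
    Measurable (rieszKernel Q s x) :=
  (continuous_const.dist continuous_id).measurable.pow_const _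

lemma rieszKernel_le_of_mem_ball (hQs : 0 ≤ Q * s) {c x y : X} {η : ℝ} (hx : x ∈ ball c η)
    (hy : y ∉ ball c (2 * η)) : rieszKernel Q s x y ≤ 2 ^ (Q * s) * rieszKernel Q s c y :=
  Real.rpow_neg_le_mul_rpow_neg hQs (dist_center_pos_of_mem_ball hx hy) two_pos
    (dist_center_le_two_mul_dist_of_mem_ball hx hy)

lemma rieszKernel_center_le_of_mem_ball (hQs : 0 ≤ Q * s) {c x y : X} {η : ℝ}
    (hx : x ∈ ball c η) (hy : y ∉ ball c (2 * η)) :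
    rieszKernel Q s c y ≤ 2 ^ (Q * s) * rieszKernel Q s x y := by
  have hxy : 0 < dist x y := by
    linarith [dist_center_pos_of_mem_ball hx hy, dist_center_le_two_mul_dist_of_mem_ball hx hy]
  exact Real.rpow_neg_le_mul_rpow_neg hQs hxy two_pos
    (dist_le_two_mul_dist_center_of_mem_ball hx hy)

end RieszKernel

section Capacity

variable {X : Type*} [MeasurableSpace X] {m : Measure X} {K : X → X → ℝ} {p : ℝ}
  {E E' : Set X} {f : X → ℝ}

lemma capacity_le (hf : MemLp f (ENNReal.ofReal p) m) (hE : ∀ x ∈ E, 1 ≤ potential m K f x) :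
    capacity m K p E ≤ eLpNorm f (ENNReal.ofReal p) m ^ p :=
  iInf₂_le f ⟨hf, hE⟩

lemma capacity_mono (h : E ⊆ E') : capacity m K p E ≤ capacity m K p E' :=
  le_iInf₂ fun _ hf => capacity_le hf.1 fun x hx => hf.2 x (h hx)

lemma capacity_empty (hp : 0 < p) : capacity m K p ∅ = 0 :=
  nonpos_iff_eq_zero.1 <| (capacity_le MemLp.zero (by simp)).trans_eq
    (by simp [ENNReal.zero_rpow_of_pos hp])

lemma capacity_eq_top_of_kernel_eq_zero {x : X} (hx : x ∈ E) (hK : ∀ y, K x y = 0) :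
    capacity m K p E = ⊤ :=
  iInf₂_eq_top.2 fun f hf => absurd (hf.2 x hx) (by simp [potential, hK])

lemma le_mul_capacity {a A : ℝ≥0∞} (hA0 : A ≠ 0) (hA : A ≠ ⊤)
    (h : ∀ f, MemLp f (ENNReal.ofReal p) m → (∀ x ∈ E, 1 ≤ potential m K f x) →
      a ≤ A * eLpNorm f (ENNReal.ofReal p) m ^ p) :
    a ≤ A * capacity m K p E := by
  simp only [capacity, ENNReal.mul_iInf_of_ne hA0 hA]
  exact le_iInf₂ fun f hf => h f hf.1 hf.2

lemma integrable_of_one_le_potential {x : X} (h : 1 ≤ potential m K f x) :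
    Integrable (fun y => K x y * f y) m := by
  -- the Bochner integral of a non-integrable function is `0`
  by_contra hi
  rw [potential, integral_undef hi] at h
  norm_num at h

lemma one_le_potential_abs {x : X} (hK : ∀ y, 0 ≤ K x y) (h : 1 ≤ potential m K f x) :
    1 ≤ potential m K (fun y => |f y|) x := by
  have hi := integrable_of_one_le_potential h
  refine h.trans (integral_mono hi ?_ fun y => mul_le_mul_of_nonneg_left (le_abs_self _) (hK y))
  simpa only [abs_mul, abs_of_nonneg (hK _)] using hi.abs

lemma eLpNorm_rpow_eq_lintegral (hp : 0 < p) :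
    eLpNorm f (ENNReal.ofReal p) m ^ p = ∫⁻ y, ‖f y‖ₑ ^ p ∂m := by
  have := eLpNorm_nnreal_pow_eq_lintegral (μ := m) (f := f) (p := p.toNNReal) (by simpa using hp)
  rwa [Real.coe_toNNReal _ hp.le] at this

lemma capacity_le_of_lintegral_compl_le (hK : ∀ x y, 0 ≤ K x y) (hp : 0 < p) (hf0 : 0 ≤ f)
    (hf : MemLp f (ENNReal.ofReal p) m) {B : Set X} (hB : MeasurableSet B)
    (hE : ∀ x ∈ E, 1 ≤ potential m K f x ∧
      ∫⁻ y in Bᶜ, ENNReal.ofReal (K x y * f y) ∂m ≤ ENNReal.ofReal (1 / 2)) :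
    capacity m K p E ≤ 2 ^ p * ∫⁻ y in B, ‖f y‖ₑ ^ p ∂m := by
  set g : X → ℝ := B.indicator fun y => 2 * f y
  have hg : MemLp g (ENNReal.ofReal p) m := (hf.const_mul 2).indicator hB
  have hpot : ∀ x ∈ E, 1 ≤ potential m K g x := by
    intro x hx
    obtain ⟨hone, htail⟩ := hE x hx
    have hi := integrable_of_one_le_potential hone
    have hnn : ∀ y, 0 ≤ K x y * f y := fun y => mul_nonneg (hK x y) (hf0 y)
    have htail' : ∫ y in Bᶜ, K x y * f y ∂m ≤ 1 / 2 := by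
      rw [integral_eq_lintegral_of_nonneg_ae (.of_forall hnn) hi.1.restrict]
      simpa using ENNReal.toReal_mono ENNReal.ofReal_ne_top htail
    have hsplit := integral_add_compl hB hi
    have hg_eq : potential m K g x = 2 * ∫ y in B, K x y * f y ∂m := by
      have : (fun y => K x y * g y) = B.indicator fun y => 2 * (K x y * f y) := by
        ext y; by_cases hy : y ∈ B <;> simp [g, hy]; ring
      rw [potential, this, integral_indicator hB, integral_const_mul]
    rw [hg_eq]
    unfold potential at hone
    linarith
  refine (capacity_le hg hpot).trans_eq ?_
  have hnorm : ∀ y, ‖g y‖ₑ ^ p = B.indicator (fun y => 2 ^ p * ‖f y‖ₑ ^ p) y := by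
    intro y
    by_cases hy : y ∈ B
    · simp [g, hy, enorm_mul, ENNReal.mul_rpow_of_nonneg _ _ hp.le,
        Real.enorm_eq_ofReal zero_le_two]
    · simp [g, hy, ENNReal.zero_rpow_of_pos hp]
  rw [eLpNorm_rpow_eq_lintegral hp, lintegral_congr hnorm, lintegral_indicator hB,
    lintegral_const_mul' _ _ (by simp [ENNReal.rpow_eq_top_iff])]

end Capacity

lemma ENNReal.le_rpow_mul_of_le_rpow_mul_rpow {p q : ℝ} (hpq : p.HolderConjugate q)
    {S a b : ℝ≥0∞} (hS : S ≠ ⊤) (h : S ≤ (a * S) ^ (1 / q) * b ^ (1 / p)) :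
    S ≤ a ^ (p / q) * b := by
  rcases eq_or_ne S 0 with rfl | hS0
  · exact zero_le
  have hq : 0 ≤ 1 / q := by simp [hpq.symm.pos.le]
  have hSq0 : S ^ (1 / q) ≠ 0 := by simp [ENNReal.rpow_eq_zero_iff, hS0, hS, hpq.symm.pos]
  have hSqtop : S ^ (1 / q) ≠ ⊤ := by simp [ENNReal.rpow_eq_top_iff, hS0, hS, hpq.symm.pos]
  have hsplit : S = S ^ (1 / q) * S ^ (1 / p) := by
    rw [← ENNReal.rpow_add _ _ hS0 hS, add_comm, one_div, one_div, hpq.inv_add_inv_eq_one,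
      ENNReal.rpow_one]
  have hroot : S ^ (1 / p) ≤ a ^ (1 / q) * b ^ (1 / p) := by
    rw [← ENNReal.mul_le_mul_iff_right hSq0 hSqtop, ← hsplit]
    calc S ≤ (a * S) ^ (1 / q) * b ^ (1 / p) := h
      _ = S ^ (1 / q) * (a ^ (1 / q) * b ^ (1 / p)) := by
        rw [ENNReal.mul_rpow_of_nonneg _ _ hq]; ring
  calc S = (S ^ (1 / p)) ^ p := by rw [← ENNReal.rpow_mul, one_div_mul_cancel hpq.pos.ne',
        ENNReal.rpow_one]
    _ ≤ (a ^ (1 / q) * b ^ (1 / p)) ^ p := by gcongr; exact hpq.nonneg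
    _ = a ^ (p / q) * b := by
        rw [ENNReal.mul_rpow_of_nonneg _ _ hpq.nonneg, ← ENNReal.rpow_mul, ← ENNReal.rpow_mul,
          one_div_mul_cancel hpq.pos.ne', ENNReal.rpow_one, one_div_mul_eq_div]

lemma lintegral_rpow_le_of_le {X : Type*} [MeasurableSpace X] {m : Measure X} {G : X → ℝ≥0∞}
    (hG : AEMeasurable G m) {C : ℝ≥0∞} (hGC : ∀ y, G y ≤ C) {q : ℝ} (hq : 1 ≤ q) :
    ∫⁻ y, G y ^ q ∂m ≤ C ^ (q - 1) * ∫⁻ y, G y ∂m := by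
  rw [← lintegral_const_mul'' _ hG]
  refine lintegral_mono fun y => ?_
  calc G y ^ q = G y ^ (q - 1) * G y ^ (1 : ℝ) := by
        rw [← ENNReal.rpow_add_of_nonneg _ _ (by linarith) zero_le_one, sub_add_cancel]
    _ ≤ C ^ (q - 1) * G y := by
        rw [ENNReal.rpow_one]
        exact mul_le_mul_left (ENNReal.rpow_le_rpow (hGC y) (by linarith)) _

section RieszTail

variable {X : Type*} [MetricSpace X] [MeasurableSpace X] {m : Measure X} {Q s : ℝ}

def rieszTail (Q s : ℝ) (c : X) (ρ : ℝ) : X → ℝ≥0∞ :=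
  (ball c ρ)ᶜ.indicator fun y => ENNReal.ofReal (rieszKernel Q s c y)

lemma lintegral_rieszTail_le (c : X) (ρ : ℝ) :
    ∫⁻ y, rieszTail Q s c ρ y ∂m ≤ ∫⁻ y, ENNReal.ofReal (rieszKernel Q s c y) ∂m :=
  lintegral_mono fun _ => Set.indicator_le_self _ _ _

variable [OpensMeasurableSpace X]

lemma measurable_rieszTail (c : X) (ρ : ℝ) : Measurable (rieszTail Q s c ρ) :=
  (measurable_rieszKernel c).ennreal_ofReal.indicator measurableSet_ball.compl

lemma one_le_lintegral_rieszTail_of_half_lt (hQs : 0 ≤ Q * s) {f : X → ℝ} (hf0 : 0 ≤ f)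
    {c x : X} {η : ℝ} (hx : x ∈ ball c η)
    (h : ENNReal.ofReal (1 / 2) <
      ∫⁻ y in (ball c (2 * η))ᶜ, ENNReal.ofReal (rieszKernel Q s x y * f y) ∂m) :
    1 ≤ ∫⁻ y, rieszTail Q s c (2 * η) y * (ENNReal.ofReal (2 ^ (Q * s + 1)) * ‖f y‖ₑ) ∂m := by
  have hpt : ∀ y, (ball c (2 * η))ᶜ.indicator
      (fun y => ENNReal.ofReal (rieszKernel Q s x y * f y)) y ≤
      ENNReal.ofReal (2 ^ (Q * s)) * (rieszTail Q s c (2 * η) y * ‖f y‖ₑ) := by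
    intro y
    by_cases hy : y ∈ ball c (2 * η)
    · simp [hy]
    rw [Set.indicator_of_mem hy, rieszTail, Set.indicator_of_mem hy, ← mul_assoc,
      ← ENNReal.ofReal_mul (by positivity), Real.enorm_eq_ofReal (hf0 y),
      ← ENNReal.ofReal_mul (mul_nonneg (by positivity) (rieszKernel_nonneg c y))]
    exact ENNReal.ofReal_le_ofReal (by
      gcongr
      · exact hf0 y
      · exact rieszKernel_le_of_mem_ball hQs hx hy)
  have hlt : ENNReal.ofReal (1 / 2) <
      ENNReal.ofReal (2 ^ (Q * s)) * ∫⁻ y, rieszTail Q s c (2 * η) y * ‖f y‖ₑ ∂m := by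
    refine h.trans_le ?_
    rw [← lintegral_indicator measurableSet_ball.compl,
      ← lintegral_const_mul' _ _ ENNReal.ofReal_ne_top]
    exact lintegral_mono hpt
  calc (1 : ℝ≥0∞) = ENNReal.ofReal 2 * ENNReal.ofReal (1 / 2) := by
        rw [← ENNReal.ofReal_mul zero_le_two]; norm_num
    _ ≤ ENNReal.ofReal 2 *
          (ENNReal.ofReal (2 ^ (Q * s)) * ∫⁻ y, rieszTail Q s c (2 * η) y * ‖f y‖ₑ ∂m) := by
        gcongr
    _ = _ := by
        rw [← mul_assoc, ← ENNReal.ofReal_mul zero_le_two, ← lintegral_const_mul' _ _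
          ENNReal.ofReal_ne_top, Real.rpow_add_one two_ne_zero, mul_comm 2]
        exact lintegral_congr fun y => by ring

variable {Cd Cw : ℝ≥0∞}

lemma measure_ball_mul_rieszTail_le (hQs : 0 ≤ Q * s)
    (hdoubling : ∀ x r, m (ball x (2 * r)) ≤ Cd * m (ball x r)) (c : X) (η : ℝ) (y : X) :
    m (ball c (2 * η)) * rieszTail Q s c (2 * η) y ≤
      Cd * ENNReal.ofReal (2 ^ (Q * s)) *
        ∫⁻ z in ball c η, ENNReal.ofReal (rieszKernel Q s y z) ∂m := by
  by_cases hy : y ∈ ball c (2 * η)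
  · simp [rieszTail, hy]
  have hpole : ∀ z ∈ ball c η, ENNReal.ofReal (rieszKernel Q s c y) ≤
      ENNReal.ofReal (2 ^ (Q * s)) * ENNReal.ofReal (rieszKernel Q s y z) := fun z hz => by
    rw [← ENNReal.ofReal_mul (by positivity), rieszKernel_comm y]
    exact ENNReal.ofReal_le_ofReal (rieszKernel_center_le_of_mem_ball hQs hz hy)
  have hmeas : Measurable fun z => ENNReal.ofReal (rieszKernel Q s y z) :=
    (measurable_rieszKernel y).ennreal_ofReal
  calc m (ball c (2 * η)) * rieszTail Q s c (2 * η) y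
      ≤ Cd * m (ball c η) * ENNReal.ofReal (rieszKernel Q s c y) := by
        rw [rieszTail, Set.indicator_of_mem hy]; gcongr; exact hdoubling c η
    _ = Cd * ∫⁻ _ in ball c η, ENNReal.ofReal (rieszKernel Q s c y) ∂m := by
        rw [setLIntegral_const, mul_assoc, mul_comm (m _)]
    _ ≤ Cd * ∫⁻ z in ball c η,
          ENNReal.ofReal (2 ^ (Q * s)) * ENNReal.ofReal (rieszKernel Q s y z) ∂m := by
        gcongr Cd * ?_; exact setLIntegral_mono (hmeas.const_mul _) hpole
    _ = _ := by rw [lintegral_const_mul _ hmeas, mul_assoc]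

variable {ι : Type*} [Countable ι] {c : ι → X} {η : ι → ℝ}

lemma tsum_measure_ball_mul_rieszTail_le (hQs : 0 ≤ Q * s)
    (hdoubling : ∀ x r, m (ball x (2 * r)) ≤ Cd * m (ball x r))
    (hkernel : ∀ x, ∫⁻ y, ENNReal.ofReal (rieszKernel Q s x y) ∂m ≤ Cw)
    (hdisj : Pairwise (Disjoint on fun k => ball (c k) (2 * η k))) (y : X) :
    ∑' k, m (ball (c k) (2 * η k)) * rieszTail Q s (c k) (2 * η k) y ≤
      Cd * ENNReal.ofReal (2 ^ (Q * s)) * Cw := by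
  have hdisj' : Pairwise (Disjoint on fun k => ball (c k) (η k)) := fun k k' hkk' =>
    (hdisj hkk').mono ball_subset_ball_two_mul ball_subset_ball_two_mul
  calc ∑' k, m (ball (c k) (2 * η k)) * rieszTail Q s (c k) (2 * η k) y
      ≤ ∑' k, Cd * ENNReal.ofReal (2 ^ (Q * s)) *
          ∫⁻ z in ball (c k) (η k), ENNReal.ofReal (rieszKernel Q s y z) ∂m :=
        ENNReal.tsum_le_tsum fun k => measure_ball_mul_rieszTail_le hQs hdoubling _ _ y
    _ = Cd * ENNReal.ofReal (2 ^ (Q * s)) *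
          ∫⁻ z in ⋃ k, ball (c k) (η k), ENNReal.ofReal (rieszKernel Q s y z) ∂m := by
        rw [ENNReal.tsum_mul_left, lintegral_iUnion (fun _ => measurableSet_ball) hdisj']
    _ ≤ Cd * ENNReal.ofReal (2 ^ (Q * s)) * Cw := by
        gcongr
        exact (setLIntegral_le_lintegral _ _).trans (hkernel y)

lemma lintegral_tsum_mul_rieszTail_le
    (hkernel : ∀ x, ∫⁻ y, ENNReal.ofReal (rieszKernel Q s x y) ∂m ≤ Cw) (w : ι → ℝ≥0∞)
    (ρ : ι → ℝ) : ∫⁻ y, ∑' k, w k * rieszTail Q s (c k) (ρ k) y ∂m ≤ Cw * ∑' k, w k := calc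
  ∫⁻ y, ∑' k, w k * rieszTail Q s (c k) (ρ k) y ∂m
      = ∑' k, w k * ∫⁻ y, rieszTail Q s (c k) (ρ k) y ∂m := by
        rw [lintegral_tsum fun k => ((measurable_rieszTail _ _).const_mul _).aemeasurable]
        exact tsum_congr fun k => lintegral_const_mul _ (measurable_rieszTail _ _)
    _ ≤ ∑' k, w k * Cw :=
        ENNReal.tsum_le_tsum fun k => by
          gcongr; exact (lintegral_rieszTail_le _ _).trans (hkernel _)
    _ = Cw * ∑' k, w k := by rw [ENNReal.tsum_mul_right, mul_comm]

variable [IsFiniteMeasure m]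

lemma tsum_measure_ball_le_of_one_le_lintegral_rieszTail (hQs : 0 ≤ Q * s)
    {p q : ℝ} (hpq : p.HolderConjugate q)
    (hdoubling : ∀ x r, m (ball x (2 * r)) ≤ Cd * m (ball x r))
    (hkernel : ∀ x, ∫⁻ y, ENNReal.ofReal (rieszKernel Q s x y) ∂m ≤ Cw)
    (hdisj : Pairwise (Disjoint on fun k => ball (c k) (2 * η k)))
    {F : X → ℝ≥0∞} (hF : AEMeasurable F m)
    (htail : ∀ k, 1 ≤ ∫⁻ y, rieszTail Q s (c k) (2 * η k) y * F y ∂m) :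
    ∑' k, m (ball (c k) (2 * η k)) ≤
      ((Cd * ENNReal.ofReal (2 ^ (Q * s)) * Cw) ^ (q - 1) * Cw) ^ (p / q) *
        ∫⁻ y, F y ^ p ∂m := by
  set w : ι → ℝ≥0∞ := fun k => m (ball (c k) (2 * η k))
  set T : ι → X → ℝ≥0∞ := fun k => rieszTail Q s (c k) (2 * η k)
  set G : X → ℝ≥0∞ := fun y => ∑' k, w k * T k y
  set S := ∑' k, w k
  have hT : ∀ k, Measurable (T k) := fun k => measurable_rieszTail _ _
  have hG : Measurable G := Measurable.tsum fun k => (hT k).const_mul _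
  have hS : S ≠ ⊤ := by
    simp only [S, w, ← measure_iUnion hdisj fun _ => measurableSet_ball]
    exact measure_ne_top _ _
  have hSG : S ≤ ∫⁻ y, G y * F y ∂m := calc
    S ≤ ∑' k, w k * ∫⁻ y, T k y * F y ∂m :=
        ENNReal.tsum_le_tsum fun k => le_mul_of_one_le_right' (htail k)
    _ = ∫⁻ y, G y * F y ∂m := by
        have hTF : ∀ k, AEMeasurable (fun y => T k y * F y) m := fun k => (hT k).aemeasurable.mul hF
        simp_rw [G, ← ENNReal.tsum_mul_right, mul_assoc]
        rw [lintegral_tsum fun k => (hTF k).const_mul _]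
        exact tsum_congr fun k => (lintegral_const_mul'' _ (hTF k)).symm
  have hGq : ∫⁻ y, G y ^ q ∂m ≤ (Cd * ENNReal.ofReal (2 ^ (Q * s)) * Cw) ^ (q - 1) * Cw * S := by
    rw [mul_assoc]
    exact (lintegral_rpow_le_of_le hG.aemeasurable
      (tsum_measure_ball_mul_rieszTail_le hQs hdoubling hkernel hdisj) hpq.symm.lt.le).trans
      (by gcongr; exact lintegral_tsum_mul_rieszTail_le hkernel w _)
  refine ENNReal.le_rpow_mul_of_le_rpow_mul_rpow hpq hS ?_
  calc S ≤ ∫⁻ y, (G * F) y ∂m := hSG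
    _ ≤ (∫⁻ y, G y ^ q ∂m) ^ (1 / q) * (∫⁻ y, F y ^ p ∂m) ^ (1 / p) :=
        ENNReal.lintegral_mul_le_Lp_mul_Lq m hpq.symm hG.aemeasurable hF
    _ ≤ _ := by gcongr; exact hpq.symm.one_div_nonneg

lemma tsum_measure_ball_le_of_half_lt_lintegral_compl (hQs : 0 ≤ Q * s) {p q : ℝ}
    (hpq : p.HolderConjugate q)
    (hdoubling : ∀ x r, m (ball x (2 * r)) ≤ Cd * m (ball x r))
    (hkernel : ∀ x, ∫⁻ y, ENNReal.ofReal (rieszKernel Q s x y) ∂m ≤ Cw)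
    (hdisj : Pairwise (Disjoint on fun k => ball (c k) (2 * η k)))
    {f : X → ℝ} (hf : AEStronglyMeasurable f m) (hf0 : 0 ≤ f) {J : Set ι}
    (hJ : ∀ k ∈ J, ∃ x ∈ ball (c k) (η k), ENNReal.ofReal (1 / 2) <
      ∫⁻ y in (ball (c k) (2 * η k))ᶜ, ENNReal.ofReal (rieszKernel Q s x y * f y) ∂m) :
    ∑' k : J, m (ball (c k) (2 * η k)) ≤
      ((Cd * ENNReal.ofReal (2 ^ (Q * s)) * Cw) ^ (q - 1) * Cw) ^ (p / q) *
        ENNReal.ofReal (2 ^ (Q * s + 1)) ^ p * ∫⁻ y, ‖f y‖ₑ ^ p ∂m := by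
  refine (tsum_measure_ball_le_of_one_le_lintegral_rieszTail (c := fun k : J => c k)
    (η := fun k : J => η k) hQs hpq hdoubling hkernel
    (hdisj.comp_of_injective Subtype.val_injective)
    (hf.enorm.const_mul (ENNReal.ofReal (2 ^ (Q * s + 1)))) fun k => ?_).trans_eq ?_
  · obtain ⟨x, hx, h⟩ := hJ k k.2
    exact one_le_lintegral_rieszTail_of_half_lt hQs hf0 hx h
  · simp_rw [ENNReal.mul_rpow_of_nonneg _ _ hpq.nonneg]
    rw [lintegral_const_mul' _ _ (by simp [ENNReal.rpow_eq_top_iff, hpq.nonneg])]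
    exact (mul_assoc _ _ _).symm

end RieszTail

def quasiAdditivityConst (Q s p q : ℝ) (Cd Cw : ℝ≥0∞) : ℝ≥0∞ :=
  2 ^ p + ((Cd * ENNReal.ofReal (2 ^ (Q * s)) * Cw) ^ (q - 1) * Cw) ^ (p / q) *
    ENNReal.ofReal (2 ^ (Q * s + 1)) ^ p

lemma quasiAdditivityConst_ne_top {Q s p q : ℝ} (hpq : p.HolderConjugate q) {Cd Cw : ℝ≥0∞}
    (hCd : Cd ≠ ⊤) (hCw : Cw ≠ ⊤) : quasiAdditivityConst Q s p q Cd Cw ≠ ⊤ := by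
  have hq : 0 ≤ q - 1 := hpq.symm.sub_one_pos.le
  unfold quasiAdditivityConst
  apply_rules [ENNReal.add_ne_top.2, And.intro, ENNReal.mul_ne_top, ENNReal.rpow_ne_top_of_nonneg,
    ENNReal.ofReal_ne_top, ENNReal.ofNat_ne_top, hpq.nonneg, div_nonneg, hpq.symm.nonneg]

lemma one_lt_quasiAdditivityConst {Q s p q : ℝ} (hpq : p.HolderConjugate q) (Cd Cw : ℝ≥0∞) :
    1 < quasiAdditivityConst Q s p q Cd Cw :=
  (ENNReal.one_lt_rpow one_lt_two hpq.pos).trans_le le_self_add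

section QuasiAdditivity

variable {X : Type*} [MetricSpace X] [MeasurableSpace X] [OpensMeasurableSpace X]
  {m : Measure X} [IsFiniteMeasure m] {Q s p q : ℝ} {Cd Cw : ℝ≥0∞}
  {ι : Type*} [Countable ι] {c : ι → X} {η : ι → ℝ} {E : ι → Set X}

theorem tsum_capacity_le_mul_eLpNorm (hQs : 0 ≤ Q * s) (hpq : p.HolderConjugate q)
    (hdoubling : ∀ x r, m (ball x (2 * r)) ≤ Cd * m (ball x r))
    (hkernel : ∀ x, ∫⁻ y, ENNReal.ofReal (rieszKernel Q s x y) ∂m ≤ Cw)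
    (hdisj : Pairwise (Disjoint on fun k => ball (c k) (2 * η k)))
    (hE : ∀ k, E k ⊆ ball (c k) (η k))
    (hcap : ∀ k, capacity m (rieszKernel Q s) p (E k) ≤ m (ball (c k) (2 * η k)))
    {f : X → ℝ} (hf : MemLp f (ENNReal.ofReal p) m) (hf0 : 0 ≤ f)
    (hpot : ∀ x ∈ ⋃ k, E k, 1 ≤ potential m (rieszKernel Q s) f x) :
    ∑' k, capacity m (rieszKernel Q s) p (E k) ≤
      quasiAdditivityConst Q s p q Cd Cw * eLpNorm f (ENNReal.ofReal p) m ^ p := by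
  set B : ι → Set X := fun k => ball (c k) (2 * η k)
  set bad : Set ι := {k | ∃ x ∈ E k, ENNReal.ofReal (1 / 2) <
    ∫⁻ y in (B k)ᶜ, ENNReal.ofReal (rieszKernel Q s x y * f y) ∂m}
  have hgood : ∀ k ∉ bad, capacity m (rieszKernel Q s) p (E k) ≤
      2 ^ p * ∫⁻ y in B k, ‖f y‖ₑ ^ p ∂m := fun k hk =>
    capacity_le_of_lintegral_compl_le rieszKernel_nonneg hpq.pos hf0 hf measurableSet_ball
      fun x hx => ⟨hpot x (Set.mem_iUnion_of_mem k hx), not_lt.1 fun h => hk ⟨x, hx, h⟩⟩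
  have hbad := tsum_measure_ball_le_of_half_lt_lintegral_compl hQs hpq hdoubling hkernel hdisj
    hf.aestronglyMeasurable hf0 (J := bad) fun k ⟨x, hx, h⟩ => ⟨x, hE k hx, h⟩
  have hsplit : ∀ k, capacity m (rieszKernel Q s) p (E k) ≤
      2 ^ p * ∫⁻ y in B k, ‖f y‖ₑ ^ p ∂m + bad.indicator (fun k => m (B k)) k := by
    intro k
    by_cases hk : k ∈ bad
    · rw [Set.indicator_of_mem hk]; exact (hcap k).trans le_add_self
    · exact (hgood k hk).trans le_self_add
  have hunion : ∑' k, ∫⁻ y in B k, ‖f y‖ₑ ^ p ∂m ≤ ∫⁻ y, ‖f y‖ₑ ^ p ∂m := by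
    rw [← lintegral_iUnion (fun _ => measurableSet_ball) hdisj]
    exact setLIntegral_le_lintegral _ _
  calc ∑' k, capacity m (rieszKernel Q s) p (E k)
      ≤ 2 ^ p * ∑' k, ∫⁻ y in B k, ‖f y‖ₑ ^ p ∂m + ∑' k : bad, m (B k) := by
        rw [tsum_subtype bad fun k => m (B k), ← ENNReal.tsum_mul_left, ← ENNReal.tsum_add]
        exact ENNReal.tsum_le_tsum hsplit
    _ ≤ 2 ^ p * ∫⁻ y, ‖f y‖ₑ ^ p ∂m + _ := add_le_add (by gcongr) hbad
    _ = _ := by rw [eLpNorm_rpow_eq_lintegral hpq.pos, quasiAdditivityConst]; ring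

theorem tsum_capacity_le_mul_capacity (hQs : 0 ≤ Q * s) (hpq : p.HolderConjugate q)
    (hCd : Cd ≠ ⊤) (hCw : Cw ≠ ⊤) (hdoubling : ∀ x r, m (ball x (2 * r)) ≤ Cd * m (ball x r))
    (hkernel : ∀ x, ∫⁻ y, ENNReal.ofReal (rieszKernel Q s x y) ∂m ≤ Cw)
    (hdisj : Pairwise (Disjoint on fun k => ball (c k) (2 * η k)))
    (hE : ∀ k, E k ⊆ ball (c k) (η k))
    (hcap : ∀ k, capacity m (rieszKernel Q s) p (E k) ≤ m (ball (c k) (2 * η k))) :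
    ∑' k, capacity m (rieszKernel Q s) p (E k) ≤
      quasiAdditivityConst Q s p q Cd Cw * capacity m (rieszKernel Q s) p (⋃ k, E k) := by
  refine le_mul_capacity (one_lt_quasiAdditivityConst hpq Cd Cw).ne_bot
    (quasiAdditivityConst_ne_top hpq hCd hCw) fun f hf hpot => ?_
  rw [← eLpNorm_congr_norm_ae (f := fun y => |f y|) (.of_forall fun y => by simp)]
  exact tsum_capacity_le_mul_eLpNorm hQs hpq hdoubling hkernel hdisj hE hcap hf.abs
    (fun y => abs_nonneg (f y)) fun x hx => one_le_potential_abs (rieszKernel_nonneg x) (hpot x hx)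

end QuasiAdditivity

section KernelBound

variable {X : Type*} [MetricSpace X] {Q s D : ℝ}

lemma rieszKernel_le_tsum_indicator_ball (hQs : 0 < Q * s) (hD : 0 < D)
    (hdist : ∀ x y : X, dist x y ≤ D) (x y : X) :
    ENNReal.ofReal (rieszKernel Q s x y) ≤ ∑' j : ℕ, (ball x (2 * (D * (1 / 2) ^ j))).indicator
      (fun _ => ENNReal.ofReal (2 ^ (Q * s) * (D * (1 / 2) ^ j) ^ (-(Q * s)))) y := by
  rcases eq_or_ne x y with rfl | hxy
  · simp [rieszKernel, Real.zero_rpow (neg_ne_zero.2 hQs.ne')]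
  have hd : 0 < dist x y := dist_pos.2 hxy
  obtain ⟨n, hn, hn'⟩ :=
    exists_nat_pow_near ((one_le_div hd).2 (hdist x y)) (_root_.one_lt_two : (1 : ℝ) < 2)
  have hρ : dist x y ≤ D * (1 / 2) ^ n := by
    rw [one_div_pow, mul_one_div, le_div_iff₀ (by positivity), mul_comm]
    exact (le_div_iff₀ hd).1 hn
  have hρ' : D * (1 / 2) ^ n ≤ 2 * dist x y := by
    rw [one_div_pow, mul_one_div, div_le_iff₀ (by positivity)]
    rw [div_lt_iff₀ hd, pow_succ] at hn'
    linarith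
  refine le_trans ?_ (ENNReal.le_tsum n)
  rw [Set.indicator_of_mem (mem_ball.2 (by rw [dist_comm]; linarith))]
  exact ENNReal.ofReal_le_ofReal
    (Real.rpow_neg_le_mul_rpow_neg hQs.le (by positivity) two_pos hρ')

variable [MeasurableSpace X] [OpensMeasurableSpace X] {m : Measure X} {C : ℝ}

lemma exists_lintegral_rieszKernel_le (hQs : 0 < Q * s) (hQsQ : Q * s < Q) (hD : 0 < D)
    (hdist : ∀ x y : X, dist x y ≤ D)
    (hup : ∀ x ρ, 0 < ρ → m (ball x ρ) ≤ ENNReal.ofReal (C * ρ ^ Q)) :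
    ∃ Cw ≠ ⊤, ∀ x, ∫⁻ y, ENNReal.ofReal (rieszKernel Q s x y) ∂m ≤ Cw := by
  set ρ : ℕ → ℝ := fun j => D * (1 / 2) ^ j
  set β := 2 ^ (Q * s) * C * 2 ^ Q * D ^ (Q - Q * s)
  set r : ℝ := (1 / 2) ^ (Q - Q * s)
  have hr : r < 1 := Real.rpow_lt_one (by norm_num) (by norm_num) (by linarith)
  have hterm : ∀ j, 2 ^ (Q * s) * ρ j ^ (-(Q * s)) * (C * (2 * ρ j) ^ Q) = β * r ^ j := by
    intro j
    have hρj : 0 < ρ j := by positivity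
    rw [Real.mul_rpow zero_le_two hρj.le]
    have : ρ j ^ (-(Q * s)) * ρ j ^ Q = D ^ (Q - Q * s) * r ^ j := by
      rw [← Real.rpow_add hρj, neg_add_eq_sub, Real.mul_rpow hD.le (by positivity),
        Real.rpow_pow_comm (by norm_num)]
    linear_combination (2 ^ (Q * s) * C * 2 ^ Q) * this
  refine ⟨∑' j, ENNReal.ofReal (β * r ^ j), ?_, fun x => ?_⟩
  · have hr' : ENNReal.ofReal r < 1 := ENNReal.ofReal_lt_one.2 hr
    have hr0 : 0 ≤ r := Real.rpow_nonneg (by norm_num) _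
    simp_rw [ENNReal.ofReal_mul' (pow_nonneg hr0 _), ENNReal.ofReal_pow hr0,
      ENNReal.tsum_mul_left, ENNReal.tsum_geometric]
    exact ENNReal.mul_ne_top ENNReal.ofReal_ne_top (ENNReal.inv_ne_top.2 (tsub_pos_of_lt hr').ne')
  calc ∫⁻ y, ENNReal.ofReal (rieszKernel Q s x y) ∂m
      ≤ ∫⁻ y, ∑' j, (ball x (2 * ρ j)).indicator
          (fun _ => ENNReal.ofReal (2 ^ (Q * s) * ρ j ^ (-(Q * s)))) y ∂m :=
        lintegral_mono (rieszKernel_le_tsum_indicator_ball hQs hD hdist x)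
    _ = ∑' j, ENNReal.ofReal (2 ^ (Q * s) * ρ j ^ (-(Q * s))) * m (ball x (2 * ρ j)) := by
        rw [lintegral_tsum fun j => (measurable_const.indicator measurableSet_ball).aemeasurable]
        exact tsum_congr fun j => lintegral_indicator_const measurableSet_ball _
    _ ≤ ∑' j, ENNReal.ofReal (2 ^ (Q * s) * ρ j ^ (-(Q * s))) *
          ENNReal.ofReal (C * (2 * ρ j) ^ Q) :=
        ENNReal.tsum_le_tsum fun j => by gcongr; exact hup x _ (by positivity)
    _ = ∑' j, ENNReal.ofReal (β * r ^ j) := tsum_congr fun j => by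
        rw [← ENNReal.ofReal_mul (by positivity), hterm]

end KernelBound

lemma diam_univ_pos (X : Type*) [MetricSpace X] [CompactSpace X] [Nontrivial X] :
    0 < diam (Set.univ : Set X) :=
  diam_pos Set.nontrivial_univ isCompact_univ.isBounded

namespace IsAhlfors

variable {X : Type*} [MetricSpace X] [CompactSpace X] [Nontrivial X] [MeasurableSpace X]
  {m : Measure X} {Q : ℝ}

lemma isFiniteMeasure (h : IsAhlfors m Q) : IsFiniteMeasure m := by
  obtain ⟨c₁, _, -, -, hball⟩ := h
  have hD := diam_univ_pos X
  have : IsLocallyFiniteMeasure m := ⟨fun x => ⟨ball x (diam Set.univ / 2),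
    ball_mem_nhds x (by positivity),
    (hball x _ (by positivity) (by linarith)).2.trans_lt ENNReal.ofReal_lt_top⟩⟩
  exact CompactSpace.isFiniteMeasure

lemma exists_measure_ball_le (h : IsAhlfors m Q) (hQ : 0 ≤ Q) :
    ∃ C, ∀ x ρ, 0 < ρ → m (ball x ρ) ≤ ENNReal.ofReal (C * ρ ^ Q) := by
  have := h.isFiniteMeasure
  obtain ⟨c₁, c₂, hc₁, hc₁₂, hball⟩ := h
  set D := diam (Set.univ : Set X)
  have hD : 0 < D := diam_univ_pos X
  have hDQ : 0 < D ^ Q := Real.rpow_pos_of_pos hD Q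
  refine ⟨c₂ + m.real Set.univ / D ^ Q, fun x ρ hρ => ?_⟩
  rcases lt_or_ge ρ D with hρD | hDρ
  · refine (hball x ρ hρ hρD).2.trans (ENNReal.ofReal_le_ofReal ?_)
    gcongr
    exact le_add_of_nonneg_right (by positivity)
  calc m (ball x ρ) ≤ m Set.univ := measure_mono (Set.subset_univ _)
    _ = ENNReal.ofReal (m.real Set.univ / D ^ Q * D ^ Q) := by
        rw [div_mul_cancel₀ _ hDQ.ne', ofReal_measureReal]
    _ ≤ ENNReal.ofReal ((c₂ + m.real Set.univ / D ^ Q) * ρ ^ Q) := by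
        gcongr
        · exact add_nonneg (by linarith) (div_nonneg measureReal_nonneg hDQ.le)
        · exact le_add_of_nonneg_left (by linarith)

lemma exists_measure_ball_two_mul_le (h : IsAhlfors m Q) (hQ : 0 ≤ Q) :
    ∃ Cd ≠ ⊤, ∀ x r, m (ball x (2 * r)) ≤ Cd * m (ball x r) := by
  obtain ⟨C, hC⟩ := h.exists_measure_ball_le hQ
  obtain ⟨c₁, _, hc₁, -, hball⟩ := h
  set D := diam (Set.univ : Set X)
  have hD : 0 < D := diam_univ_pos X
  refine ⟨ENNReal.ofReal (C * 4 ^ Q / c₁), ENNReal.ofReal_ne_top, fun x r => ?_⟩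
  rcases le_or_gt r 0 with hr | hr
  · simp [ball_eq_empty.2 (by linarith : 2 * r ≤ 0)]
  -- Below the scale `D / 2` use the Ahlfors bounds; above it, `B(x, 4 · D / 2)` is everything.
  set ρ := min r (D / 2)
  have hρ : 0 < ρ := lt_min hr (by positivity)
  have hsub : ball x (2 * r) ⊆ ball x (4 * ρ) := fun z hz => by
    rw [mem_ball] at *
    have := dist_le_diam_of_mem isCompact_univ.isBounded (Set.mem_univ z) (Set.mem_univ x)
    rw [mul_min_of_nonneg _ _ (by norm_num : (0 : ℝ) ≤ 4)]
    exact lt_min (by linarith) (by linarith)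
  calc m (ball x (2 * r)) ≤ m (ball x (4 * ρ)) := measure_mono hsub
    _ ≤ ENNReal.ofReal (C * (4 * ρ) ^ Q) := hC x _ (by positivity)
    _ = ENNReal.ofReal (C * 4 ^ Q / c₁) * ENNReal.ofReal (c₁ * ρ ^ Q) := by
        rw [← ENNReal.ofReal_mul' (by positivity), Real.mul_rpow (by norm_num) hρ.le]
        congr 1
        field_simp
    _ ≤ ENNReal.ofReal (C * 4 ^ Q / c₁) * m (ball x r) := by
        gcongr
        exact (hball x ρ hρ (by linarith [min_le_right r (D / 2)])).1.trans
          (measure_mono (ball_subset_ball (min_le_left _ _)))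

end IsAhlfors

section EtaStar

variable {X : Type*} [MetricSpace X] [MeasurableSpace X] {m : Measure X} {Q s p M : ℝ}

lemma ball_subset_ball_etaStar (hM : 1 ≤ M) (x : X) (r : ℝ) :
    ball x r ⊆ ball x (etaStar m Q s p x (M * r)) := fun _ hz =>
  mem_ball.2 <| (mem_ball.1 hz).trans_le <|
    (le_mul_of_one_le_left (dist_nonneg.trans (mem_ball.1 hz).le) hM).trans (le_max_left _ _)

lemma capacity_le_measure_ball_etaStar (hp : 0 < p) (hM : 1 ≤ M) {x : X} {r : ℝ}
    (hne : (etaSet m Q s p x (M * r)).Nonempty) {E : Set X} (hE : E ⊆ ball x r) :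
    capacity m (rieszKernel Q s) p E ≤ m (ball x (2 * etaStar m Q s p x (M * r))) := by
  rcases le_or_gt r 0 with hr | hr
  · rw [Set.subset_empty_iff.1 (hE.trans (ball_eq_empty.2 hr).subset), capacity_empty hp]
    exact zero_le
  set η := etaStar m Q s p x (M * r)
  have hMr : r ≤ M * r := le_mul_of_one_le_left hr.le hM
  have hη : M * r ≤ η := le_max_left _ _
  obtain ⟨R, hR, hRη⟩ := (csInf_lt_iff ⟨0, fun R hR => hR.1.le⟩ hne).1
    ((le_max_right _ _).trans_lt (by linarith : η < 2 * η))
  calc capacity m (rieszKernel Q s) p E ≤ capacity m (rieszKernel Q s) p (ball x (M * r)) :=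
        capacity_mono (hE.trans (ball_subset_ball hMr))
    _ ≤ m (ball x R) := hR.2
    _ ≤ m (ball x (2 * η)) := measure_mono (ball_subset_ball hRη.le)

end EtaStar

/-- On a one-point space the Riesz kernel vanishes, so nonempty sets have infinite capacity. -/
lemma tsum_capacity_le_of_subsingleton {X : Type*} [MetricSpace X] [Subsingleton X]
    [MeasurableSpace X] {m : Measure X} {Q s p : ℝ} (hQs : Q * s ≠ 0) (hp : 0 < p)
    {A : ℝ≥0∞} (hA : A ≠ 0) {ι : Type*} (E : ι → Set X) :
    ∑' k, capacity m (rieszKernel Q s) p (E k) ≤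
      A * capacity m (rieszKernel Q s) p (⋃ k, E k) := by
  rcases (⋃ k, E k).eq_empty_or_nonempty with hE | ⟨x, hx⟩
  · simp [Set.iUnion_eq_empty.1 hE, capacity_empty hp]
  rw [capacity_eq_top_of_kernel_eq_zero hx fun y => ?_, ENNReal.mul_top hA]
  · exact le_top
  · rw [rieszKernel, Subsingleton.elim x y, dist_self, Real.zero_rpow (neg_ne_zero.2 hQs)]

/-- **Quasi-additivity of the Riesz capacity on compact Ahlfors-regular spaces.**
There is `Ψ = Ψ(X,p,s) ≥ 1` such that for all `M ≥ 1` there is `1 < Ã < ∞` such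
that for any countable family of balls `B(x_k,r_k)` for which the radii
`η*_{X,p}(x_k,M r_k)` are defined and the balls `B(x_k, Ψ η*_{X,p}(x_k, M r_k))`
are pairwise disjoint, and any compact `E = ⋃_k E_k` with `E_k ⊆ B(x_k,r_k)`,
one has `Σ_k C_{K_{X,s},p}(E_k) ≤ Ã · C_{K_{X,s},p}(E)`. -/
theorem quasi_additivity_ahlfors
    {X : Type*} [MetricSpace X] [CompactSpace X] [MeasurableSpace X] [BorelSpace X]
    (m : Measure X) (Q : ℝ) (hQ : 0 < Q) (hAhl : IsAhlfors m Q)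
    (p p' s : ℝ) (hp : 1 < p) (hp' : 1 / p + 1 / p' = 1)
    (hs1 : 1 / p' ≤ s) (hs2 : s < 1) :
    ∃ Ψ : ℝ, 1 ≤ Ψ ∧ ∀ M : ℝ, 1 ≤ M →
      ∃ A : ℝ≥0∞, 1 < A ∧ A < ⊤ ∧
        ∀ (ι : Type) (_ : Countable ι) (c : ι → X) (r : ι → ℝ),
          (∀ k, (etaSet m Q s p (c k) (M * r k)).Nonempty) →
          (Pairwise fun k k' => Disjoint
              (Metric.ball (c k) (Ψ * etaStar m Q s p (c k) (M * r k)))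
              (Metric.ball (c k') (Ψ * etaStar m Q s p (c k') (M * r k')))) →
          ∀ E : ι → Set X, IsCompact (⋃ k, E k) →
            (∀ k, E k ⊆ Metric.ball (c k) (r k)) →
            ∑' k, capacity m (rieszKernel Q s) p (E k) ≤
              A * capacity m (rieszKernel Q s) p (⋃ k, E k) := by
  have hpq : p.HolderConjugate p' := Real.holderConjugate_iff.2 ⟨hp, by simpa [one_div] using hp'⟩
  have hQs : 0 < Q * s := mul_pos hQ ((one_div_pos.2 hpq.symm.pos).trans_le hs1)
  refine ⟨2, one_le_two, fun M hM => ?_⟩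
  rcases subsingleton_or_nontrivial X with hX | hX
  · exact ⟨2, one_lt_two, ENNReal.ofNat_lt_top, fun ι _ c r _ _ E _ _ =>
      tsum_capacity_le_of_subsingleton hQs.ne' hpq.pos two_ne_zero E⟩
  have := hAhl.isFiniteMeasure
  obtain ⟨C, hC⟩ := hAhl.exists_measure_ball_le hQ.le
  obtain ⟨Cd, hCd, hdoubling⟩ := hAhl.exists_measure_ball_two_mul_le hQ.le
  obtain ⟨Cw, hCw, hkernel⟩ := exists_lintegral_rieszKernel_le hQs (by nlinarith)
    (diam_univ_pos X) (fun x y => dist_le_diam_of_mem isCompact_univ.isBounded trivial trivial) hC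
  refine ⟨quasiAdditivityConst Q s p p' Cd Cw, one_lt_quasiAdditivityConst hpq Cd Cw,
    (quasiAdditivityConst_ne_top hpq hCd hCw).lt_top, fun ι _ c r hne hdisj E _ hE => ?_⟩
  exact tsum_capacity_le_mul_capacity hQs.le hpq hCd hCw hdoubling hkernel hdisj
    (fun k => (hE k).trans (ball_subset_ball_etaStar hM _ _))
    fun k => capacity_le_measure_ball_etaStar hpq.pos hM (hne k) (hE k)
end
end

section
/- Let (X,d) be a metric space, let E ⊆ X×(0,∞), and let f : X×[0,∞) → [0,∞) be a function such that (1) f(x,y1) ≤ f(x,y2) whenever y1 ≤ y2, and (2) there exists a constant α ≥ 1 with f(x1,y) ≤ α·f(x2,y) for all x1, x2 ∈ X and all y ≥ 0. For x0 ∈ X let Ω_{f,x0} := { (x,y) : d(x,x0) ≤ f(x0,y) } and, for y ≥ 0, Ω_{f,x0}(y) := { x ∈ X : (x,y) ∈ Ω_{f,x0} }. Let E* := ∪_{(x,y)∈E} B_d(x,y) ⊆ X and δ_{E*}(x) := d(x, X∖E*). Then { x ∈ X : Ω_{f,x} ∩ E ≠ ∅ } ⊆ ∪_{x∈E*} Ω_{α·f,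 x}( δ_{E*}(x) ). -/
/-- **A covering lemma for approach regions.**  Let `(X,d)` be a metric space,
`E ⊆ X × (0,∞)`, and let `f : X × [0,∞) → [0,∞)` be nondecreasing in the second
variable and satisfy `f(x₁,y) ≤ α f(x₂,y)` for some `α ≥ 1`.  With
`Ω_{f,x₀} = {(x,y) : d(x,x₀) ≤ f(x₀,y)}`, `E* = ⋃_{(x,y)∈E} B(x,y)` and
`δ_{E*}(x) = d(x, X∖E*)`, one has
`{x₀ : Ω_{f,x₀} ∩ E ≠ ∅} ⊆ ⋃_{x∈E*} Ω_{αf,x}(δ_{E*}(x))`. -/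
theorem approach_region_covering_lemma
    {X : Type*} [MetricSpace X]
    (E : Set (X × ℝ)) (hE : ∀ P ∈ E, 0 < P.2)
    (f : X → ℝ → ℝ)
    (hf0 : ∀ (x : X) (y : ℝ), 0 ≤ y → 0 ≤ f x y)
    (hmono : ∀ (x : X) (y₁ y₂ : ℝ), 0 ≤ y₁ → y₁ ≤ y₂ → f x y₁ ≤ f x y₂)
    (α : ℝ) (hα : 1 ≤ α)
    (hcomp : ∀ (x₁ x₂ : X) (y : ℝ), 0 ≤ y → f x₁ y ≤ α * f x₂ y) :
    {x₀ : X | ∃ P ∈ E, dist P.1 x₀ ≤ f x₀ P.2} ⊆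
      ⋃ x ∈ ⋃ P ∈ E, Metric.ball P.1 P.2,
        {z : X | dist z x ≤ α * f x (Metric.infDist x (⋃ P ∈ E, Metric.ball P.1 P.2)ᶜ)} := by
  intro x₀ hx₀
  obtain ⟨P, hPE, hPd⟩ := hx₀
  obtain ⟨x, y⟩ := P
  have hy : 0 < y := hE _ hPE
  set S : Set X := ⋃ P ∈ E, Metric.ball P.1 P.2 with hS
  have hball : Metric.ball x y ⊆ S := by
    intro z hz
    exact Set.mem_biUnion hPE hz
  have hxS : x ∈ S := hball (Metric.mem_ball_self hy)
  by_cases hne : Sᶜ.Nonempty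
  · -- main case: complement nonempty, δ(x) ≥ y
    have hδy : y ≤ Metric.infDist x Sᶜ := by
      by_contra h
      obtain ⟨z, hz, hdz⟩ := (Metric.infDist_lt_iff hne).1 (lt_of_not_ge h)
      exact hz (hball (by simpa [Metric.mem_ball, dist_comm] using hdz))
    refine Set.mem_biUnion hxS ?_
    have hδ0 : (0:ℝ) ≤ Metric.infDist x Sᶜ := Metric.infDist_nonneg
    calc dist x₀ x = dist x x₀ := dist_comm _ _
      _ ≤ f x₀ y := hPd
      _ ≤ α * f x y := hcomp _ _ _ hy.le
      _ ≤ α * f x (Metric.infDist x Sᶜ) := by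
          have := hmono x y _ hy.le hδy
          nlinarith [hf0 x y hy.le]
  · -- complement empty: every point is in S, δ = 0, use x₀ itself
    have hx₀S : x₀ ∈ S := by
      by_contra h
      exact hne ⟨x₀, h⟩
    refine Set.mem_biUnion hx₀S ?_
    have : dist x₀ x₀ = 0 := dist_self _
    simp only [Set.mem_setOf_eq, this]
    have hδ0 : (0:ℝ) ≤ Metric.infDist x₀ Sᶜ := Metric.infDist_nonneg
    nlinarith [hf0 x₀ _ hδ0]
end
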